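/- Let d ≥ 1, let ρ : ℝ^d → (0,∞) be strictly positive, c ∈ ℝ^d, L ∈ ℝ^{d×d} invertible, Σ := L L^T, α(y) := L y + c, and ρ_α := ρ∘α. Define φ^{(1)}_{m,C}(x; ρ) := ρ(x)/N_d(x; m, C) and the level sets L_{m,C}(t; ρ) := {x ∈ ℝ^d : φ^{(1)}_{m,C}(x; ρ) > t}. Then for every x ∈ ℝ^d and every u > 0: L_{0, I_d}(u · φ^{(1)}_{0, I_d}(α^{-1}(x); ρ_α); ρ_α) = α^{-1}( L_{c, Σ}(u · φ^{(1)}_{c, Σ}(x; ρ); ρ) ), where α^{-1}(S) = {y : α(y) ∈ S}. -/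

import Mathlib

open MeasureTheory Matrix

/-- The multivariate Gaussian density `N_d(x; m, C)` on `ℝ^d` with mean `m` and
(positive definite) covariance `C`. -/
noncomputable def gaussDensity (d : ℕ) (m : Fin d → ℝ)
    (C : Matrix (Fin d) (Fin d) ℝ) (x : Fin d → ℝ) : ℝ :=
  (2 * Real.pi) ^ (-(d : ℝ) / 2) * C.det ^ (-(1 : ℝ) / 2) *
    Real.exp (-((x - m) ⬝ᵥ C⁻¹.mulVec (x - m)) / 2)

/-- The non-Gaussian factor `φ^{(1)}_{m,C}(x; ρ) = ρ(x) / N_d(x; m, C)` used in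
general purpose elliptical slice sampling. -/
noncomputable def phiOne (d : ℕ) (m : Fin d → ℝ)
    (C : Matrix (Fin d) (Fin d) ℝ) (ρ : (Fin d → ℝ) → ℝ) (x : Fin d → ℝ) : ℝ :=
  ρ x / gaussDensity d m C x

/-- The superlevel set `L_{m,C}(t; ρ) = {x : φ^{(1)}_{m,C}(x; ρ) > t}`. -/
def levelSet (d : ℕ) (m : Fin d → ℝ) (C : Matrix (Fin d) (Fin d) ℝ)
    (ρ : (Fin d → ℝ) → ℝ) (t : ℝ) : Set (Fin d → ℝ) :=
  {x | t < phiOne d m C ρ x}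

/-!
Under `x = L y + c` the density `N(x; c, L Lᵀ)` becomes `N(y; 0, I)` times the positive constant
`det (L Lᵀ) ^ (-1/2)`, so `φ^{(1)}_{0,I}(·; ρ ∘ α)` is `φ^{(1)}_{c,L Lᵀ}(·; ρ) ∘ α` times that
constant, and the constant cancels from both sides of the superlevel-set inequality.
-/

section

variable {n : Type*} [Fintype n] [DecidableEq n] {L : Matrix n n ℝ}

theorem det_mul_transpose_pos (hL : IsUnit L.det) : 0 < (L * Lᵀ).det := by
  rw [det_mul, det_transpose]
  exact mul_self_pos.mpr hL.ne_zero

theorem rpow_det_mul_transpose_pos (hL : IsUnit L.det) (r : ℝ) : 0 < (L * Lᵀ).det ^ r :=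
  Real.rpow_pos_of_pos (det_mul_transpose_pos hL) r

theorem dotProduct_mul_transpose_inv_mulVec (hL : IsUnit L.det) (y : n → ℝ) :
    L *ᵥ y ⬝ᵥ (L * Lᵀ)⁻¹ *ᵥ (L *ᵥ y) = y ⬝ᵥ y := by
  rw [Matrix.mul_inv_rev, mulVec_mulVec, Matrix.mul_assoc, nonsing_inv_mul L hL, Matrix.mul_one,
    ← transpose_nonsing_inv, dotProduct_mulVec, vecMul_transpose, mulVec_mulVec,
    nonsing_inv_mul L hL, one_mulVec]

end

theorem gaussDensity_affine {d : ℕ} {L : Matrix (Fin d) (Fin d) ℝ} (hL : IsUnit L.det)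
    (c y : Fin d → ℝ) :
    gaussDensity d c (L * Lᵀ) (L *ᵥ y + c) =
      gaussDensity d 0 1 y * (L * Lᵀ).det ^ (-(1 : ℝ) / 2) := by
  simp only [gaussDensity, add_sub_cancel_right, dotProduct_mul_transpose_inv_mulVec hL,
    sub_zero, inv_one, one_mulVec, det_one, Real.one_rpow]
  ring

theorem phiOne_comp_affine {d : ℕ} (ρ : (Fin d → ℝ) → ℝ) {L : Matrix (Fin d) (Fin d) ℝ}
    (hL : IsUnit L.det) (c y : Fin d → ℝ) :
    phiOne d 0 1 (fun z => ρ (L *ᵥ z + c)) y =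
      phiOne d c (L * Lᵀ) ρ (L *ᵥ y + c) * (L * Lᵀ).det ^ (-(1 : ℝ) / 2) := by
  have hk := rpow_det_mul_transpose_pos hL (-(1 : ℝ) / 2)
  rw [phiOne, phiOne, gaussDensity_affine hL, div_mul_eq_div_div, div_mul_cancel₀ _ hk.ne']

theorem levelSet_affine_transform_general
    (d : ℕ)
    (ρ : (Fin d → ℝ) → ℝ)
    (c : Fin d → ℝ) (L : Matrix (Fin d) (Fin d) ℝ) (hL : IsUnit L.det)
    (S : Matrix (Fin d) (Fin d) ℝ) (hS : S = L * Lᵀ)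
    (x : Fin d → ℝ) (u : ℝ) :
    levelSet d 0 1 (fun y => ρ (L.mulVec y + c))
        (u * phiOne d 0 1 (fun y => ρ (L.mulVec y + c)) (L⁻¹.mulVec (x - c))) =
      (fun y => L.mulVec y + c) ⁻¹'
        (levelSet d c S ρ (u * phiOne d c S ρ x)) := by
  subst hS
  have hk := rpow_det_mul_transpose_pos hL (-(1 : ℝ) / 2)
  have hx : L *ᵥ L⁻¹ *ᵥ (x - c) + c = x := by
    rw [mulVec_mulVec, mul_nonsing_inv L hL, one_mulVec, sub_add_cancel]
  ext y
  simp only [levelSet, Set.mem_ofPred_eq, Set.mem_preimage, phiOne_comp_affine ρ hL, hx,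
    ← mul_assoc, mul_lt_mul_iff_of_pos_right hk]

/-- the superlevel-set identity for the GP-ESS factor under the affine
transformation `α(y) = L y + c` with `Σ = L Lᵀ`:
`L_{0,I}(u·φ^{(1)}_{0,I}(α⁻¹(x); ρ∘α); ρ∘α) = α⁻¹(L_{c,Σ}(u·φ^{(1)}_{c,Σ}(x; ρ); ρ))`. -/
theorem levelSet_affine_transform
    (d : ℕ) (hd : 1 ≤ d)
    (ρ : (Fin d → ℝ) → ℝ) (hρ_pos : ∀ x, 0 < ρ x)
    (c : Fin d → ℝ) (L : Matrix (Fin d) (Fin d) ℝ) (hL : IsUnit L.det)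
    (S : Matrix (Fin d) (Fin d) ℝ) (hS : S = L * Lᵀ)
    (x : Fin d → ℝ) (u : ℝ) (hu : 0 < u) :
    levelSet d 0 1 (fun y => ρ (L.mulVec y + c))
        (u * phiOne d 0 1 (fun y => ρ (L.mulVec y + c)) (L⁻¹.mulVec (x - c))) =
      (fun y => L.mulVec y + c) ⁻¹'
        (levelSet d c S ρ (u * phiOne d c S ρ x)) :=
  levelSet_affine_transform_general d ρ c L hL S hS x u
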